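/- arXiv:1204.5519 — 2 statements merged into one kernel-verified Lean document; each statement's English description precedes it below -/
import Mathlib

section
/- Let Ω be a finite nonempty set and μ a probability distribution on Ω. Let Q = {q_1, …, q_k} be a finite set of pairwise distinct probability distributions on Ω and let x be a probability distribution on Q. Then the following are equivalent: (i) there exist probability distributions ψ^ω on {1,…,k}, one for each ω ∈ Ω, such that setting P(ω,i) = μ(ω)·ψ^ω(i), one has ∑_ω P(ω,i) = x(q_i) and P(ω,i) = x(q_i)·q_i(ω) for all ω and i (i.e., (Q,x) is the distribution over Bayesian posteriors of a signal correlated with ω); (ii) ∑_{i=1}^{k} x(q_i)·q_i(ω) = μ(ω) for every ω ∈ Ω. -/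
/-! Averaging the posteriors recovers the prior because `∑_i ψ^ω(i) = 1`. Conversely, when the
posteriors average to the prior, Bayes' rule read backwards, `ψ^ω(i) = x_i q_i(ω) / μ(ω)`,
defines the signal; at states with `μ(ω) = 0` every `x_i q_i(ω)` vanishes, so any distribution
(here `x`) can serve as `ψ^ω`. -/

open Finset

noncomputable section

/-- `p` is a probability distribution on the finite set `Ω`. -/
def IsDist {Ω : Type*} [Fintype Ω] (p : Ω → ℝ) : Prop :=
  (∀ ω, 0 ≤ p ω) ∧ ∑ ω, p ω = 1

section Signal

variable {Ω ι : Type*} [Fintype ι]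

theorem sum_mul_posterior_eq_prior {μ : Ω → ℝ} {x : ι → ℝ} {q : ι → Ω → ℝ} {ψ : Ω → ι → ℝ}
    (hψ : ∀ ω, ∑ i, ψ ω i = 1) (hP : ∀ ω i, μ ω * ψ ω i = x i * q i ω) (ω : Ω) :
    ∑ i, x i * q i ω = μ ω := by
  simp_rw [← hP, ← mul_sum, hψ, mul_one]

def signalOfPosteriors (μ : Ω → ℝ) (x : ι → ℝ) (q : ι → Ω → ℝ) (ω : Ω) (i : ι) : ℝ :=
  if μ ω = 0 then x i else x i * q i ω / μ ω

variable {μ : Ω → ℝ} {x : ι → ℝ} {q : ι → Ω → ℝ}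

theorem mul_signalOfPosteriors (hx0 : ∀ i, 0 ≤ x i) (hq0 : ∀ i ω, 0 ≤ q i ω)
    (h : ∀ ω, ∑ i, x i * q i ω = μ ω) (ω : Ω) (i : ι) :
    μ ω * signalOfPosteriors μ x q ω i = x i * q i ω := by
  unfold signalOfPosteriors
  split_ifs with h0
  · have hterm_nonneg : ∀ j ∈ univ, 0 ≤ x j * q j ω := fun j _ => mul_nonneg (hx0 j) (hq0 j ω)
    have hterms_zero := (sum_eq_zero_iff_of_nonneg hterm_nonneg).mp (by rw [h ω, h0])
    rw [h0, zero_mul, hterms_zero i (mem_univ i)]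
  · field_simp

theorem isDist_signalOfPosteriors (hx : IsDist x) (hq0 : ∀ i ω, 0 ≤ q i ω)
    (h : ∀ ω, ∑ i, x i * q i ω = μ ω) (ω : Ω) : IsDist (signalOfPosteriors μ x q ω) := by
  unfold signalOfPosteriors
  split_ifs with h0
  · exact hx
  · have hμ_nonneg : 0 ≤ μ ω := h ω ▸ sum_nonneg fun i _ => mul_nonneg (hx.1 i) (hq0 i ω)
    refine ⟨fun i => div_nonneg (mul_nonneg (hx.1 i) (hq0 i ω)) hμ_nonneg, ?_⟩
    rw [← sum_div, h ω, div_self h0]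

theorem sum_mul_signalOfPosteriors [Fintype Ω] (hx0 : ∀ i, 0 ≤ x i) (hq : ∀ i, IsDist (q i))
    (h : ∀ ω, ∑ i, x i * q i ω = μ ω) (i : ι) :
    ∑ ω, μ ω * signalOfPosteriors μ x q ω i = x i := by
  simp_rw [mul_signalOfPosteriors hx0 (fun i => (hq i).1) h, ← mul_sum, (hq i).2, mul_one]

end Signal

theorem posterior_feasibility_general
    {Ω : Type*} [Fintype Ω]
    (μ : Ω → ℝ)
    (k : ℕ) (q : Fin k → Ω → ℝ) (hq : ∀ i, IsDist (q i))
    (x : Fin k → ℝ) (hx0 : ∀ i, 0 ≤ x i) (hx1 : ∑ i, x i = 1) :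
    (∃ ψ : Ω → Fin k → ℝ,
        (∀ ω, (∀ i, 0 ≤ ψ ω i) ∧ ∑ i, ψ ω i = 1) ∧
        (∀ i, ∑ ω, μ ω * ψ ω i = x i) ∧
        (∀ ω i, μ ω * ψ ω i = x i * q i ω)) ↔
      (∀ ω, ∑ i, x i * q i ω = μ ω) := by
  constructor
  · rintro ⟨ψ, hψ, -, hP⟩
    exact sum_mul_posterior_eq_prior (fun ω => (hψ ω).2) hP
  · intro h
    have hq0 : ∀ i ω, 0 ≤ q i ω := fun i => (hq i).1
    exact ⟨signalOfPosteriors μ x q, isDist_signalOfPosteriors ⟨hx0, hx1⟩ hq0 h,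
      sum_mul_signalOfPosteriors hx0 hq h, mul_signalOfPosteriors hx0 hq0 h⟩

/-- A pair `(Q, x)` consisting of a finite set of pairwise distinct
posteriors `q_1, …, q_k` and a distribution `x` over them is the distribution over Bayesian
posteriors of some signal correlated with `ω ∼ μ` (i.e. there are conditional signal
distributions `ψ^ω` with `P(ω,i) = μ(ω)·ψ^ω(i)` satisfying `∑_ω P(ω,i) = x(q_i)` and
`P(ω,i) = x(q_i)·q_i(ω)`) if and only if `∑_i x(q_i)·q_i(ω) = μ(ω)` for every `ω`. -/
theorem posterior_feasibility
    {Ω : Type*} [Fintype Ω] [Nonempty Ω]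
    (μ : Ω → ℝ) (hμ : IsDist μ)
    (k : ℕ) (q : Fin k → Ω → ℝ) (hq : ∀ i, IsDist (q i))
    (hdistinct : Function.Injective q)
    (x : Fin k → ℝ) (hx0 : ∀ i, 0 ≤ x i) (hx1 : ∑ i, x i = 1) :
    (∃ ψ : Ω → Fin k → ℝ,
        (∀ ω, (∀ i, 0 ≤ ψ ω i) ∧ ∑ i, ψ ω i = 1) ∧
        (∀ i, ∑ ω, μ ω * ψ ω i = x i) ∧
        (∀ ω i, μ ω * ψ ω i = x i * q i ω)) ↔
      (∀ ω, ∑ i, x i * q i ω = μ ω) :=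
  posterior_feasibility_general μ k q hq x hx0 hx1

end
end

section
/- Define v : ℝ²_{≥0} → ℝ by v(q) = max(q₁, q₀ − 8·q₁) for q = (q₀, q₁), and let q⁰ = (0.6, 0.4) and q¹ = (0.4, 0.6). Let L be a finite set and, for each ℓ ∈ L, let A^ℓ be a 2×2 diagonal matrix with nonnegative entries such that ∑_{ℓ∈L} A^ℓ is the identity matrix. Then for every δ with 0 < δ ≤ 10⁻⁴: if ∑_{ℓ∈L} v(A^ℓ q¹) ≥ 1 − 2δ, then ∑_{ℓ∈L} v(A^ℓ q⁰) ≥ 1 − 36·√(2δ). (Equivalently, since v is homogeneous of degree 1, writing q^{θ,ℓ} = A^ℓ q^θ / (1ᵀA^ℓ q^θ) whenever 1ᵀA^ℓ q^θ > 0: if the posterior-value average ∑_ℓ (1ᵀA^ℓ q¹)·v(q^{1,ℓ}) is at least 1 − 2δ, then ∑_ℓ (1ᵀA^ℓ q⁰)·v(q^{0,ℓ}) ≥ 1 − 36·√(2δ).) -/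
open Finset

noncomputable section

/-- The buyer's optimal expected utility under (unnormalized) belief `q = (q₀, q₁)` for the
utility function `u(θ,ω,0) = ω`, `u(θ,ω,1) = 1 − 9ω`: `v(q) = max(q₁, q₀ − 8·q₁)`. -/
def vEx (q : ℝ × ℝ) : ℝ := max q.2 (q.1 - 8 * q.2)

private lemma max_split (x y : ℝ) : max x y = x + max 0 (y - x) := by
  rcases le_total x y with h | h
  · rw [max_eq_right h, max_eq_right (by linarith : (0:ℝ) ≤ y - x)]; ring
  · rw [max_eq_left h, max_eq_left (by linarith : y - x ≤ (0:ℝ))]; ring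

/-- Let `q⁰ = (0.6, 0.4)`, `q¹ = (0.4, 0.6)`, and let `{A^ℓ}_{ℓ∈L}` be a
finite family of 2×2 nonnegative diagonal matrices (with diagonal entries `a ℓ`, `b ℓ`)
summing to the identity. For every `0 < δ ≤ 10⁻⁴`: if `∑_ℓ v(A^ℓ q¹) ≥ 1 − 2δ` then
`∑_ℓ v(A^ℓ q⁰) ≥ 1 − 36·√(2δ)`. -/
theorem high_value_deviation {L : Type*} [Fintype L]
    (a b : L → ℝ) (ha : ∀ ℓ, 0 ≤ a ℓ) (hb : ∀ ℓ, 0 ≤ b ℓ)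
    (hsa : ∑ ℓ, a ℓ = 1) (hsb : ∑ ℓ, b ℓ = 1)
    (δ : ℝ) (hδ0 : 0 < δ) (hδ1 : δ ≤ 1 / 10000)
    (h : 1 - 2 * δ ≤ ∑ ℓ, vEx (a ℓ * 0.4, b ℓ * 0.6)) :
    1 - 36 * Real.sqrt (2 * δ) ≤ ∑ ℓ, vEx (a ℓ * 0.6, b ℓ * 0.4) := by
  set f : L → ℝ := fun ℓ => max 0 (0.4 * a ℓ - 5.4 * b ℓ) with hfdef
  set g : L → ℝ := fun ℓ => max 0 (0.6 * a ℓ - 3.6 * b ℓ) with hgdef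
  have hf : ∀ ℓ, vEx (a ℓ * 0.4, b ℓ * 0.6) = 0.6 * b ℓ + f ℓ := by
    intro ℓ
    show max (b ℓ * 0.6) (a ℓ * 0.4 - 8 * (b ℓ * 0.6)) = _
    rw [max_split]
    have : a ℓ * 0.4 - 8 * (b ℓ * 0.6) - b ℓ * 0.6 = 0.4 * a ℓ - 5.4 * b ℓ := by ring
    rw [this, hfdef]; ring_nf
  have hg : ∀ ℓ, vEx (a ℓ * 0.6, b ℓ * 0.4) = 0.4 * b ℓ + g ℓ := by
    intro ℓ
    show max (b ℓ * 0.4) (a ℓ * 0.6 - 8 * (b ℓ * 0.4)) = _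
    rw [max_split]
    have : a ℓ * 0.6 - 8 * (b ℓ * 0.4) - b ℓ * 0.4 = 0.6 * a ℓ - 3.6 * b ℓ := by ring
    rw [this, hgdef]; ring_nf
  -- From the hypothesis: ∑ f ≥ 0.4 - 2δ
  have hsum1 : ∑ ℓ, vEx (a ℓ * 0.4, b ℓ * 0.6) = 0.6 + ∑ ℓ, f ℓ := by
    rw [Finset.sum_congr rfl fun ℓ _ => hf ℓ, Finset.sum_add_distrib, ← Finset.mul_sum, hsb]
    ring
  have hF : 0.4 - 2 * δ ≤ ∑ ℓ, f ℓ := by rw [hsum1] at h; linarith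
  -- Pointwise: (3/2) * f ℓ ≤ g ℓ
  have hfg : ∀ ℓ, (3/2) * f ℓ ≤ g ℓ := by
    intro ℓ
    have hb' := hb ℓ
    have : (3/2) * f ℓ = max 0 (0.6 * a ℓ - 8.1 * b ℓ) := by
      have e : (0.6 : ℝ) * a ℓ - 8.1 * b ℓ = (3/2) * (0.4 * a ℓ - 5.4 * b ℓ) := by ring
      rw [hfdef, e, mul_max_of_nonneg _ _ (by norm_num : (0:ℝ) ≤ 3/2), mul_zero]
    rw [this]
    exact max_le_max le_rfl (by linarith)
  have hG : (3/2) * (0.4 - 2 * δ) ≤ ∑ ℓ, g ℓ :=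
    le_trans (by linarith [Finset.sum_le_sum (fun ℓ (_ : ℓ ∈ Finset.univ) => hfg ℓ),
      (Finset.mul_sum Finset.univ f (3/2)).symm]) le_rfl
  have hsum0 : ∑ ℓ, vEx (a ℓ * 0.6, b ℓ * 0.4) = 0.4 + ∑ ℓ, g ℓ := by
    rw [Finset.sum_congr rfl fun ℓ _ => hg ℓ, Finset.sum_add_distrib, ← Finset.mul_sum, hsb]
    ring
  -- √(2δ) ≥ δ
  have hsq : δ ≤ Real.sqrt (2 * δ) := by
    nlinarith [Real.sq_sqrt (by linarith : (0:ℝ) ≤ 2 * δ), Real.sqrt_nonneg (2 * δ),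
      sq_nonneg (Real.sqrt (2 * δ) - δ)]
  rw [hsum0]
  linarith
end
end
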